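/- For any spanning tree $s$ of the $n \times n$ eight-neighbor grid rooted at a corner outlet, with unit link lengths, the energy $H_1(s) = \sum_{x \ne \text{outlet}} A_x$ satisfies $H_1(s) \ge \frac{4n^3 - 3n^2 - n}{6}$, where $A_x$ is the subtree size at $x$. -/

import Mathlib

/-- The king-move (eight-neighbor) graph on `{0, …, n-1}²`: distinct vertices are
adjacent iff they differ by at most 1 in each coordinate. -/
def kingGraph (n : ℕ) : SimpleGraph (Fin n × Fin n) where
  Adj x y := x ≠ y ∧ ((x.1 : ℤ) - (y.1 : ℤ)).natAbs ≤ 1 ∧ ((x.2 : ℤ) - (y.2 : ℤ)).natAbs ≤ 1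
  symm := ⟨by
    rintro x y ⟨h1, h2, h3⟩
    exact ⟨h1.symm, by omega, by omega⟩⟩
  loopless := ⟨by rintro x ⟨h, -⟩; exact h rfl⟩

/-!
Swapping the order of summation, `∑_{x ≠ root} A_x` counts, for every vertex `y`, the non-root
vertices on the path from `y` to the root. That path has as many vertices as `y` has tree links
to the root, and since every link is a king move this depth is at least the Chebyshev distance
`max y₁ y₂` from the corner. Summing `max i j` over the grid gives `(4n³ - 3n² - n)/6`.
-/

open Finset

section ParentMap

variable {α : Type*} {f : α → α} {r y : α} {d : ℕ}

theorem natAbs_sub_iterate_le (g : α → ℤ)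
    (hg : ∀ v, v ≠ r → (g (f v) - g v).natAbs ≤ 1) (hmin : ∀ i < d, f^[i] y ≠ r) :
    (g (f^[d] y) - g y).natAbs ≤ d := by
  induction d with
  | zero => simp
  | succ d ih =>
    have hprev := ih fun i hi => hmin i (by omega)
    have hstep := hg (f^[d] y) (hmin d (by omega))
    rw [Function.iterate_succ_apply']
    omega

theorem le_card_iterates_ne [Fintype α] [DecidableEq α]
    [DecidablePred fun x => ∃ m, f^[m] y = x]
    (hd : f^[d] y = r) (hmin : ∀ i < d, f^[i] y ≠ r) :
    d ≤ #{x | x ≠ r ∧ ∃ m, f^[m] y = x} := by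
  have hinj : Set.InjOn (fun m => f^[m] y) (range d) := by
    -- an earlier repetition `f^[i] y = f^[j] y` would reach `r` already at step `d - (j - i)`
    suffices h : ∀ i j, j < d → i < j → f^[i] y ≠ f^[j] y by
      intro i hi j hj hij
      simp only [coe_range, Set.mem_Iio] at hi hj
      rcases lt_trichotomy i j with hlt | heq | hgt
      · exact absurd hij (h i j hj hlt)
      · exact heq
      · exact absurd hij.symm (h j i hi hgt)
    intro i j hj hij heq
    apply hmin (d - j + i) (by omega)
    rw [Function.iterate_add_apply, heq, ← Function.iterate_add_apply, Nat.sub_add_cancel hj.le,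
      hd]
  simpa using card_le_card_of_injOn (fun m => f^[m] y)
    (fun m hm => by
      simp only [coe_range, Set.mem_Iio] at hm
      simp only [coe_filter, mem_univ, true_and, Set.mem_ofPred_eq]
      exact ⟨hmin m hm, m, rfl⟩) hinj

end ParentMap

theorem sum_range_sum_range_max_mul_six (n : ℕ) :
    ((∑ i ∈ range n, ∑ j ∈ range n, max i j : ℕ) : ℝ) * 6
      = 4 * (n : ℝ) ^ 3 - 3 * (n : ℝ) ^ 2 - n := by
  induction n with
  | zero => simp
  | succ n ih =>
    have hrow : ∀ i ∈ range n,
        ∑ j ∈ range (n + 1), max i j = ∑ j ∈ range n, max i j + n := by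
      intro i hi
      rw [sum_range_succ, max_eq_right (mem_range.1 hi).le]
    have hlast : ∑ j ∈ range (n + 1), max n j = (n + 1) * n := by
      rw [sum_congr rfl fun j hj => max_eq_left (Nat.lt_succ_iff.1 (mem_range.1 hj)),
        sum_const, card_range, smul_eq_mul]
    rw [sum_range_succ, sum_congr rfl hrow, sum_add_distrib, hlast, sum_const, card_range,
      smul_eq_mul]
    push_cast at ih ⊢
    linarith

theorem sum_max_fin_mul_six (n : ℕ) :
    ((∑ y : Fin n × Fin n, max (y.1 : ℕ) y.2 : ℕ) : ℝ) * 6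
      = 4 * (n : ℝ) ^ 3 - 3 * (n : ℝ) ^ 2 - n := by
  rw [Fintype.sum_prod_type, Fin.sum_univ_eq_sum_range (fun i => ∑ j : Fin n, max i (j : ℕ))]
  rw [sum_congr rfl fun i _ => Fin.sum_univ_eq_sum_range (max i ·) n]
  exact sum_range_sum_range_max_mul_six n

open scoped Classical in
theorem stmt_14_general (n : ℕ) (hn : 0 < n)
    (parent : Fin n × Fin n → Fin n × Fin n)
    (root : Fin n × Fin n) (hrootdef : root = (⟨0, hn⟩, ⟨0, hn⟩))
    (hadj : ∀ v : Fin n × Fin n, v ≠ root → (kingGraph n).Adj (parent v) v)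
    (hreach : ∀ v : Fin n × Fin n, ∃ m : ℕ, parent^[m] v = root)
    (A : Fin n × Fin n → ℕ)
    (hA : ∀ x : Fin n × Fin n,
      A x = (Finset.univ.filter fun y : Fin n × Fin n => ∃ m : ℕ, parent^[m] y = x).card) :
    ((∑ x ∈ Finset.univ.filter (fun v : Fin n × Fin n => v ≠ root), A x : ℕ) : ℝ)
      ≥ (4 * (n : ℝ) ^ 3 - 3 * (n : ℝ) ^ 2 - (n : ℝ)) / 6 := by
  have hswap : ∑ x ∈ univ.filter (· ≠ root), A x
      = ∑ y, #{x | x ≠ root ∧ ∃ m, parent^[m] y = x} := by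
    simp only [hA]
    simpa [bipartiteAbove, bipartiteBelow, filter_filter] using
      sum_card_bipartiteAbove_eq_sum_card_bipartiteBelow (s := univ.filter (· ≠ root))
        (t := univ) (r := fun x y => ∃ m, parent^[m] y = x)
  have hdepth : ∀ y : Fin n × Fin n,
      max (y.1 : ℕ) y.2 ≤ #{x | x ≠ root ∧ ∃ m, parent^[m] y = x} := by
    intro y
    obtain ⟨d, hd, hmin⟩ : ∃ d, parent^[d] y = root ∧ ∀ i < d, parent^[i] y ≠ root :=
      ⟨_, Nat.find_spec (hreach y), fun _ => Nat.find_min (hreach y)⟩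
    have h1 := natAbs_sub_iterate_le (fun v => (v.1 : ℤ)) (fun v hv => (hadj v hv).2.1) hmin
    have h2 := natAbs_sub_iterate_le (fun v => (v.2 : ℤ)) (fun v hv => (hadj v hv).2.2) hmin
    have hcard := le_card_iterates_ne hd hmin
    rw [hd, hrootdef] at h1 h2
    dsimp only at h1 h2
    omega
  have hsum :
      ∑ y : Fin n × Fin n, max (y.1 : ℕ) y.2 ≤ ∑ x ∈ univ.filter (· ≠ root), A x :=
    hswap ▸ sum_le_sum fun y _ => hdepth y
  have hclosed := sum_max_fin_mul_six n
  have hsumℝ : ((∑ y : Fin n × Fin n, max (y.1 : ℕ) y.2 : ℕ) : ℝ)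
      ≤ ∑ x ∈ univ.filter (· ≠ root), A x := mod_cast hsum
  linarith

open scoped Classical in
/-- For any spanning tree of the `n × n` eight-neighbor grid rooted at a corner
outlet, with unit link lengths, the energy `H₁(s) = ∑_{x ≠ outlet} A_x` is at
least `(4n³ - 3n² - n)/6`, where `A_x` is the subtree size at `x`. -/
theorem stmt_14 (n : ℕ) (hn : 0 < n)
    (parent : Fin n × Fin n → Fin n × Fin n)
    (root : Fin n × Fin n) (hrootdef : root = (⟨0, hn⟩, ⟨0, hn⟩))
    (hroot : parent root = root)
    (hadj : ∀ v : Fin n × Fin n, v ≠ root → (kingGraph n).Adj (parent v) v)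
    (hreach : ∀ v : Fin n × Fin n, ∃ m : ℕ, parent^[m] v = root)
    (A : Fin n × Fin n → ℕ)
    (hA : ∀ x : Fin n × Fin n,
      A x = (Finset.univ.filter fun y : Fin n × Fin n => ∃ m : ℕ, parent^[m] y = x).card) :
    ((∑ x ∈ Finset.univ.filter (fun v : Fin n × Fin n => v ≠ root), A x : ℕ) : ℝ)
      ≥ (4 * (n : ℝ) ^ 3 - 3 * (n : ℝ) ^ 2 - (n : ℝ)) / 6 :=
  stmt_14_general n hn parent root hrootdef hadj hreach A hA
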